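/- arXiv:1305.4662 — 4 statements merged into one kernel-verified Lean document; each statement's English description precedes it below -/
import Mathlib

section
/- Let U be a point of the Grassmann space M and T₁ = (B₁], T₂ = (B₂] distinct tops with U ∈ T₁ ∩ T₂. If Π = [Z, B₁] is a plane through U contained in T₁ (Z of dimension k−2), then the set { S(p) ∩ T₂ : p a k-pencil with U ∈ p ⊂ Π } is exactly the set of lines through U contained in the plane [Z, B₂] of T₂; this induces a bijection f from planes through U in T₁ to planes through U in T₂. -/
variable {K V : Type*} [Field K] [AddCommGroup V] [Module K V]

/-- A `k`-pencil: the set of `k`-dimensional subspaces between a fixed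
`(k-1)`-dimensional subspace `H` and a fixed `(k+1)`-dimensional subspace `B`.
These are the lines of the Grassmann space `P(V, k)`. -/
def IsPencil (k : ℕ) (p : Set (Submodule K V)) : Prop :=
  ∃ H B : Submodule K V, Module.finrank K H = k - 1 ∧ Module.finrank K B = k + 1 ∧
    H ≤ B ∧ p = {U : Submodule K V | H ≤ U ∧ U ≤ B ∧ Module.finrank K U = k}

/-- The star `S(H)` of all `k`-subspaces containing `H`. -/
def gstar (k : ℕ) (H : Submodule K V) : Set (Submodule K V) :=
  {U : Submodule K V | Module.finrank K U = k ∧ H ≤ U}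

/-- The top `T(B)` of all `k`-subspaces contained in `B`. -/
def gtop (k : ℕ) (B : Submodule K V) : Set (Submodule K V) :=
  {U : Submodule K V | Module.finrank K U = k ∧ U ≤ B}

/-- Collinearity in the Grassmann space: two distinct points on a common pencil. -/
def GCollinear (k : ℕ) (U₁ U₂ : Submodule K V) : Prop :=
  U₁ ≠ U₂ ∧ ∃ p : Set (Submodule K V), IsPencil k p ∧ U₁ ∈ p ∧ U₂ ∈ p

/-- The star extension `S(p)` of a pencil `p`: all `k`-subspaces containing the bottom
`H = sInf p` of the pencil. -/
def starOf (k : ℕ) (p : Set (Submodule K V)) : Set (Submodule K V) :=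
  {U : Submodule K V | Module.finrank K U = k ∧ sInf p ≤ U}

private lemma finrank_sup_span_singleton' [FiniteDimensional K V] (W : Submodule K V) (x : V)
    (hx : x ∉ W) : Module.finrank K ↥(W ⊔ (K ∙ x)) = Module.finrank K W + 1 := by
  have hx0 : x ≠ 0 := fun h => hx (h ▸ W.zero_mem)
  have hinf : W ⊓ (K ∙ x) = ⊥ := by
    rw [eq_bot_iff]
    rintro v hv
    obtain ⟨hvW, hvx⟩ := Submodule.mem_inf.mp hv
    rw [Submodule.mem_span_singleton] at hvx
    obtain ⟨c, rfl⟩ := hvx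
    rcases eq_or_ne c 0 with rfl | hc
    · simp
    · exfalso
      apply hx
      have := W.smul_mem c⁻¹ hvW
      rwa [inv_smul_smul₀ hc] at this
  have h := Submodule.finrank_sup_add_finrank_inf_eq W (K ∙ x)
  rw [hinf, finrank_span_singleton hx0] at h
  simpa using h

private lemma exists_avoid [FiniteDimensional K V] (k : ℕ) :
    ∀ d (W B : Submodule K V), k = Module.finrank K W + d → W ≤ B →
      k < Module.finrank K B → ∀ v ∈ B, v ∉ W →
      ∃ A : Submodule K V, W ≤ A ∧ A ≤ B ∧ Module.finrank K A = k ∧ v ∉ A := by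
  intro d
  induction d with
  | zero =>
    intro W B hd hWB hkB v hvB hvW
    exact ⟨W, le_rfl, hWB, by omega, hvW⟩
  | succ d ih =>
    intro W B hd hWB hkB v hvB hvW
    have hWv : W ⊔ (K ∙ v) ≤ B :=
      sup_le hWB ((Submodule.span_singleton_le_iff_mem v B).mpr hvB)
    have hfr : Module.finrank K ↥(W ⊔ (K ∙ v)) = Module.finrank K W + 1 :=
      finrank_sup_span_singleton' W v hvW
    have hlt : W ⊔ (K ∙ v) < B :=
      Submodule.lt_of_le_of_finrank_lt_finrank hWv (by omega)
    obtain ⟨x, hxB, hx⟩ := SetLike.exists_of_lt hlt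
    have hxW : x ∉ W := fun h => hx (Submodule.mem_sup_left h)
    have hvWx : v ∉ W ⊔ (K ∙ x) := by
      intro hv
      rw [Submodule.mem_sup] at hv
      obtain ⟨w, hw, z, hz, hwz⟩ := hv
      rw [Submodule.mem_span_singleton] at hz
      obtain ⟨c, rfl⟩ := hz
      rcases eq_or_ne c 0 with rfl | hc
      · apply hvW
        have hwv : w = v := by simpa using hwz
        exact hwv ▸ hw
      · apply hx
        have hxv : x = c⁻¹ • (v - w) := by
          rw [← hwz]
          simp [smul_smul, inv_mul_cancel₀ hc]
        rw [hxv]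
        exact Submodule.smul_mem _ _ (Submodule.sub_mem _
          (Submodule.mem_sup_right (Submodule.mem_span_singleton_self v))
          (Submodule.mem_sup_left hw))
    have hWxB : W ⊔ (K ∙ x) ≤ B :=
      sup_le hWB ((Submodule.span_singleton_le_iff_mem x B).mpr hxB)
    have hfrx : Module.finrank K ↥(W ⊔ (K ∙ x)) = Module.finrank K W + 1 :=
      finrank_sup_span_singleton' W x hxW
    obtain ⟨A, hA1, hA2, hA3, hA4⟩ :=
      ih (W ⊔ (K ∙ x)) B (by omega) hWxB hkB v hvB hvWx
    exact ⟨A, le_sup_left.trans hA1, hA2, hA3, hA4⟩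

private lemma sInf_slab [FiniteDimensional K V] (k : ℕ) (W B U : Submodule K V)
    (hWU : W ≤ U) (hUB : U ≤ B) (hU : Module.finrank K U = k)
    (hWk : Module.finrank K W ≤ k) (hB : k < Module.finrank K B) :
    sInf {A : Submodule K V | W ≤ A ∧ A ≤ B ∧ Module.finrank K A = k} = W := by
  refine le_antisymm ?_ (le_sInf fun A hA => hA.1)
  intro v hv
  by_contra hvW
  have hvU : v ∈ U := Submodule.mem_sInf.mp hv U ⟨hWU, hUB, hU⟩
  obtain ⟨A, hWA, hAB, hAk, hvA⟩ :=
    exists_avoid k (k - Module.finrank K W) W B (by omega) (hWU.trans hUB) hB v (hUB hvU) hvW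
  exact hvA (Submodule.mem_sInf.mp hv A ⟨hWA, hAB, hAk⟩)

private lemma slab_top [FiniteDimensional K V] (k : ℕ) (hk : 1 ≤ k) (H B C U : Submodule K V)
    (hH : Module.finrank K H = k - 1) (hB : Module.finrank K B = k + 1)
    (hC : Module.finrank K C = k + 1) (hHU : H ≤ U) (hUB : U ≤ B)
    (hU : Module.finrank K U = k)
    (hsub : ∀ A : Submodule K V, H ≤ A → A ≤ B → Module.finrank K A = k → A ≤ C) :
    B = C := by
  obtain ⟨v, hvB, hvU⟩ := SetLike.exists_of_lt
    (Submodule.lt_of_le_of_finrank_lt_finrank hUB (by omega))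
  have hvH : v ∉ H := fun h => hvU (hHU h)
  have hA2 : Module.finrank K ↥(H ⊔ (K ∙ v)) = k := by
    rw [finrank_sup_span_singleton' H v hvH]; omega
  have hA2B : H ⊔ (K ∙ v) ≤ B :=
    sup_le (hHU.trans hUB) ((Submodule.span_singleton_le_iff_mem v B).mpr hvB)
  have hUA2 : U ⊔ (H ⊔ (K ∙ v)) ≤ B := sup_le hUB hA2B
  have hlt : U < U ⊔ (H ⊔ (K ∙ v)) :=
    lt_of_le_of_ne le_sup_left (fun h => hvU (h ▸ Submodule.mem_sup_right
      (Submodule.mem_sup_right (Submodule.mem_span_singleton_self v))))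
  have hBeq : U ⊔ (H ⊔ (K ∙ v)) = B :=
    Submodule.eq_of_le_of_finrank_le hUA2 (by
      have := Submodule.finrank_lt_finrank_of_lt hlt; omega)
  have hBC : B ≤ C := hBeq ▸ sup_le (hsub U hHU hUB hU) (hsub _ le_sup_left hA2B hA2)
  exact Submodule.eq_of_le_of_finrank_le hBC (by omega)

/-- for distinct tops `T₁ = (B₁]`, `T₂ = (B₂]` through `U` and a plane
`[Z, B₁]` through `U` in `T₁`, the sets `S(p) ∩ T₂` for pencils `p` with
`U ∈ p ⊆ [Z, B₁]` are exactly the lines through `U` on the plane `[Z, B₂]` of `T₂`;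
moreover the map `[Z', B₁] ↦ [Z', B₂]` is a bijection between planes through `U`
contained in `T₁` and planes through `U` contained in `T₂`. -/
theorem top_star_top {n k : ℕ} [FiniteDimensional K V]
    (hn : Module.finrank K V = n) (hk1 : 1 < k) (hk2 : k < n - 1)
    (B₁ B₂ : Submodule K V) (hB₁ : Module.finrank K B₁ = k + 1)
    (hB₂ : Module.finrank K B₂ = k + 1) (hBne : B₁ ≠ B₂)
    (U : Submodule K V) (hU : Module.finrank K U = k) (hU1 : U ≤ B₁) (hU2 : U ≤ B₂)
    (Z : Submodule K V) (hZ : Module.finrank K Z = k - 2) (hZU : Z ≤ U) :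
    ({X : Set (Submodule K V) | ∃ p : Set (Submodule K V), IsPencil k p ∧ U ∈ p ∧
        p ⊆ {A : Submodule K V | Z ≤ A ∧ A ≤ B₁ ∧ Module.finrank K A = k} ∧
        X = starOf k p ∩ gtop k B₂}
      = {q : Set (Submodule K V) | IsPencil k q ∧ U ∈ q ∧
          q ⊆ {A : Submodule K V | Z ≤ A ∧ A ≤ B₂ ∧ Module.finrank K A = k}}) ∧
    ∃ f : Set (Submodule K V) → Set (Submodule K V),
      (∀ Z' : Submodule K V, Module.finrank K Z' = k - 2 → Z' ≤ U →
        f {A : Submodule K V | Z' ≤ A ∧ A ≤ B₁ ∧ Module.finrank K A = k}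
          = {A : Submodule K V | Z' ≤ A ∧ A ≤ B₂ ∧ Module.finrank K A = k}) ∧
      Set.BijOn f
        {Pl : Set (Submodule K V) | ∃ Z' : Submodule K V,
          Module.finrank K Z' = k - 2 ∧ Z' ≤ U ∧
          Pl = {A : Submodule K V | Z' ≤ A ∧ A ≤ B₁ ∧ Module.finrank K A = k}}
        {Pl : Set (Submodule K V) | ∃ Z' : Submodule K V,
          Module.finrank K Z' = k - 2 ∧ Z' ≤ U ∧
          Pl = {A : Submodule K V | Z' ≤ A ∧ A ≤ B₂ ∧ Module.finrank K A = k}} := by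
  have hk2' : 2 ≤ k := hk1
  constructor
  · ext X
    simp only [Set.mem_setOf_eq]
    constructor
    · rintro ⟨p, ⟨H, B, hH, hB, hHB, rfl⟩, hUp, hpsub, rfl⟩
      obtain ⟨hHU, hUB, -⟩ := hUp
      have hsinf : sInf {A : Submodule K V | H ≤ A ∧ A ≤ B ∧ Module.finrank K A = k} = H :=
        sInf_slab k H B U hHU hUB hU (by omega) (by omega)
      have hZH : Z ≤ H := hsinf ▸ le_sInf fun A hA => (hpsub hA).1
      refine ⟨⟨H, B₂, hH, hB₂, hHU.trans hU2, ?_⟩, ⟨⟨hU, hsinf.le.trans hHU⟩, hU, hU2⟩, ?_⟩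
      · ext A
        simp only [starOf, gtop, Set.mem_inter_iff, Set.mem_setOf_eq, hsinf]
        tauto
      · rintro A ⟨⟨hAk, hHA⟩, -, hAB2⟩
        exact ⟨hZH.trans (hsinf.ge.trans hHA), hAB2, hAk⟩
    · rintro ⟨⟨H, B, hH, hB, hHB, rfl⟩, hUq, hqsub⟩
      obtain ⟨hHU, hUB, -⟩ := hUq
      have hBB2 : B = B₂ := slab_top k (by omega) H B B₂ U hH hB hB₂ hHU hUB hU
        (fun A hHA hAB hAk => (hqsub ⟨hHA, hAB, hAk⟩).2.1)
      have hZH : Z ≤ H :=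
        (sInf_slab k H B U hHU hUB hU (by omega) (by omega)) ▸
          le_sInf fun A hA => (hqsub hA).1
      refine ⟨{A : Submodule K V | H ≤ A ∧ A ≤ B₁ ∧ Module.finrank K A = k},
        ⟨H, B₁, hH, hB₁, hHU.trans hU1, rfl⟩, ⟨hHU, hU1, hU⟩,
        fun A hA => ⟨hZH.trans hA.1, hA.2⟩, ?_⟩
      have hsinfp : sInf {A : Submodule K V | H ≤ A ∧ A ≤ B₁ ∧ Module.finrank K A = k} = H :=
        sInf_slab k H B₁ U hHU hU1 hU (by omega) (by omega)
      subst hBB2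
      ext A
      simp only [starOf, gtop, Set.mem_inter_iff, Set.mem_setOf_eq, hsinfp]
      tauto
  · have hinf1 : ∀ Z' : Submodule K V, Module.finrank K Z' = k - 2 → Z' ≤ U →
        sInf {A : Submodule K V | Z' ≤ A ∧ A ≤ B₁ ∧ Module.finrank K A = k} = Z' :=
      fun Z' hZ' hZ'U => sInf_slab k Z' B₁ U hZ'U hU1 hU (by omega) (by omega)
    have hinf2 : ∀ Z' : Submodule K V, Module.finrank K Z' = k - 2 → Z' ≤ U →
        sInf {A : Submodule K V | Z' ≤ A ∧ A ≤ B₂ ∧ Module.finrank K A = k} = Z' :=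
      fun Z' hZ' hZ'U => sInf_slab k Z' B₂ U hZ'U hU2 hU (by omega) (by omega)
    refine ⟨fun Pl => {A : Submodule K V | sInf Pl ≤ A ∧ A ≤ B₂ ∧ Module.finrank K A = k},
      ?_, ?_, ?_, ?_⟩
    · intro Z' hZ' hZ'U
      simp only [hinf1 Z' hZ' hZ'U]
    · rintro Pl ⟨Z', hZ', hZ'U, rfl⟩
      exact ⟨Z', hZ', hZ'U, by simp only [hinf1 Z' hZ' hZ'U]⟩
    · rintro Pl₁ ⟨Z₁, hZ₁, hZ₁U, rfl⟩ Pl₂ ⟨Z₂, hZ₂, hZ₂U, rfl⟩ hf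
      simp only [hinf1 Z₁ hZ₁ hZ₁U, hinf1 Z₂ hZ₂ hZ₂U] at hf
      have hZeq : Z₁ = Z₂ := by
        rw [← hinf2 Z₁ hZ₁ hZ₁U, ← hinf2 Z₂ hZ₂ hZ₂U, hf]
      rw [hZeq]
    · rintro Pl ⟨Z', hZ', hZ'U, rfl⟩
      exact ⟨{A : Submodule K V | Z' ≤ A ∧ A ≤ B₁ ∧ Module.finrank K A = k},
        ⟨Z', hZ', hZ'U, rfl⟩, by simp only [hinf1 Z' hZ' hZ'U]⟩
end

section
/- With notation as in the bijection f between planes through U in two distinct tops T₁, T₂ of a Grassmann space: if Π₁, Π₂, Π₃ are pairwise distinct planes through U contained in T₁ such that Π₁ ∩ Π₂ ∩ Π₃ is a line, then f(Π₁) ∩ f(Π₂) ∩ f(Π₃) is also a line. -/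
variable {K V : Type*} [Field K] [AddCommGroup V] [Module K V]

lemma aux_finrank_sup_span [FiniteDimensional K V] (W : Submodule K V) (x : V)
    (hx : x ∉ W) :
    Module.finrank K ↥(W ⊔ Submodule.span K {x}) = Module.finrank K W + 1 := by
  have hx0 : x ≠ 0 := fun h => hx (h ▸ W.zero_mem)
  have hinf : W ⊓ Submodule.span K {x} = ⊥ := by
    rw [eq_bot_iff]
    rintro y ⟨hyW, hys⟩
    obtain ⟨c, rfl⟩ := Submodule.mem_span_singleton.mp hys
    rcases eq_or_ne c 0 with rfl | hc
    · simp
    · exact absurd (by simpa [smul_smul, inv_mul_cancel₀ hc] using W.smul_mem c⁻¹ hyW) hx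
  have := Submodule.finrank_sup_add_finrank_inf_eq W (Submodule.span K {x})
  rw [hinf] at this
  simp [finrank_span_singleton hx0] at this
  omega

lemma aux_two_between [FiniteDimensional K V] (H₀ B₀ : Submodule K V) (h : H₀ ≤ B₀)
    (hlt : Module.finrank K H₀ + 1 < Module.finrank K B₀) :
    ∃ A₁ A₂ : Submodule K V, A₁ ≠ A₂ ∧ H₀ ≤ A₁ ∧ A₁ ≤ B₀ ∧
      Module.finrank K A₁ = Module.finrank K H₀ + 1 ∧ H₀ ≤ A₂ ∧ A₂ ≤ B₀ ∧
      Module.finrank K A₂ = Module.finrank K H₀ + 1 := by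
  have h1 : ¬ (B₀ ≤ H₀) := fun hle => by
    have := Submodule.finrank_mono hle; omega
  obtain ⟨x, hxB, hxH⟩ := SetLike.not_le_iff_exists.mp h1
  set A₁ := H₀ ⊔ Submodule.span K {x} with hA₁def
  have hA₁r : Module.finrank K A₁ = Module.finrank K H₀ + 1 := aux_finrank_sup_span _ _ hxH
  have hA₁B : A₁ ≤ B₀ := sup_le h (by rwa [Submodule.span_le, Set.singleton_subset_iff])
  have h2 : ¬ (B₀ ≤ A₁) := fun hle => by
    have := Submodule.finrank_mono hle; omega
  obtain ⟨y, hyB, hyA₁⟩ := SetLike.not_le_iff_exists.mp h2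
  have hyH : y ∉ H₀ := fun hy => hyA₁ (le_sup_left (a := H₀) hy)
  refine ⟨A₁, H₀ ⊔ Submodule.span K {y}, ?_, le_sup_left, hA₁B, hA₁r, le_sup_left,
    sup_le h (by rwa [Submodule.span_le, Set.singleton_subset_iff]),
    aux_finrank_sup_span _ _ hyH⟩
  intro hEq
  exact hyA₁ (hEq ▸ le_sup_right (a := H₀) (Submodule.mem_span_singleton_self y))


/-- with `f` the correspondence `[Z, B₁] ↦ [Z, B₂]` between planes through
`U` in the distinct tops `T₁ = (B₁]`, `T₂ = (B₂]`, if three pairwise distinct planes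
through `U` in `T₁` intersect in a line, then so do their images under `f`. -/
theorem top_star_top_line_preserved {n k : ℕ} [FiniteDimensional K V]
    (hn : Module.finrank K V = n) (hk1 : 1 < k) (hk2 : k < n - 1)
    (B₁ B₂ : Submodule K V) (hB₁ : Module.finrank K B₁ = k + 1)
    (hB₂ : Module.finrank K B₂ = k + 1) (hBne : B₁ ≠ B₂)
    (U : Submodule K V) (hU : Module.finrank K U = k) (hU1 : U ≤ B₁) (hU2 : U ≤ B₂)
    (Z₁ Z₂ Z₃ : Submodule K V)
    (hZ₁ : Module.finrank K Z₁ = k - 2) (hZ₂ : Module.finrank K Z₂ = k - 2)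
    (hZ₃ : Module.finrank K Z₃ = k - 2)
    (hZ₁U : Z₁ ≤ U) (hZ₂U : Z₂ ≤ U) (hZ₃U : Z₃ ≤ U)
    (hne₁₂ : Z₁ ≠ Z₂) (hne₁₃ : Z₁ ≠ Z₃) (hne₂₃ : Z₂ ≠ Z₃)
    (hline : IsPencil k
      ({A : Submodule K V | Z₁ ≤ A ∧ A ≤ B₁ ∧ Module.finrank K A = k} ∩
       {A : Submodule K V | Z₂ ≤ A ∧ A ≤ B₁ ∧ Module.finrank K A = k} ∩
       {A : Submodule K V | Z₃ ≤ A ∧ A ≤ B₁ ∧ Module.finrank K A = k})) :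
    IsPencil k
      ({A : Submodule K V | Z₁ ≤ A ∧ A ≤ B₂ ∧ Module.finrank K A = k} ∩
       {A : Submodule K V | Z₂ ≤ A ∧ A ≤ B₂ ∧ Module.finrank K A = k} ∩
       {A : Submodule K V | Z₃ ≤ A ∧ A ≤ B₂ ∧ Module.finrank K A = k}) := by
  unfold IsPencil at hline ⊢
  -- k ≥ 3
  have hk3 : 3 ≤ k := by
    by_contra h
    have hk2' : k = 2 := by omega
    have h1 : Z₁ = ⊥ := by
      rw [← Submodule.finrank_eq_zero (R := K)]; omega
    have h2 : Z₂ = ⊥ := by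
      rw [← Submodule.finrank_eq_zero (R := K)]; omega
    exact hne₁₂ (h1.trans h2.symm)
  set H := Z₁ ⊔ Z₂ ⊔ Z₃ with hHdef
  -- lower bound
  have hlow : k - 1 ≤ Module.finrank K H := by
    have hlt : Z₁ < Z₁ ⊔ Z₂ := by
      refine lt_of_le_of_ne le_sup_left (fun hEq => hne₁₂ ?_)
      have h2le : Z₂ ≤ Z₁ := hEq ▸ le_sup_right
      exact (Submodule.eq_of_le_of_finrank_le h2le (by omega)).symm
    have h1 : Module.finrank K Z₁ < Module.finrank K ↥(Z₁ ⊔ Z₂) :=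
      Submodule.finrank_lt_finrank_of_lt hlt
    have h2 : Module.finrank K ↥(Z₁ ⊔ Z₂) ≤ Module.finrank K ↥(Z₁ ⊔ Z₂ ⊔ Z₃) :=
      Submodule.finrank_mono le_sup_left
    rw [hHdef]
    omega
  -- upper bound
  obtain ⟨H₀, B₀, hH₀, hB₀, hle₀, hset⟩ := hline
  obtain ⟨A₁, A₂, hAne, hHA₁, hA₁B, hA₁r, hHA₂, hA₂B, hA₂r⟩ :=
    aux_two_between H₀ B₀ hle₀ (by omega)
  have hA₁mem : A₁ ∈ {A : Submodule K V | H₀ ≤ A ∧ A ≤ B₀ ∧ Module.finrank K A = k} :=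
    ⟨hHA₁, hA₁B, by omega⟩
  have hA₂mem : A₂ ∈ {A : Submodule K V | H₀ ≤ A ∧ A ≤ B₀ ∧ Module.finrank K A = k} :=
    ⟨hHA₂, hA₂B, by omega⟩
  rw [← hset] at hA₁mem hA₂mem
  obtain ⟨⟨⟨h11, _, hA₁k⟩, h12, _, _⟩, h13, _, _⟩ := hA₁mem
  obtain ⟨⟨⟨h21, _, _⟩, h22, _, _⟩, h23, _, _⟩ := hA₂mem
  have hHinf : H ≤ A₁ ⊓ A₂ :=
    le_inf (sup_le (sup_le h11 h12) h13) (sup_le (sup_le h21 h22) h23)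
  have hinflt : A₁ ⊓ A₂ < A₁ := by
    refine lt_of_le_of_ne inf_le_left (fun hEq => hAne ?_)
    have : A₁ ≤ A₂ := by rw [← hEq]; exact inf_le_right
    exact Submodule.eq_of_le_of_finrank_le this (by omega)
  have hup : Module.finrank K H ≤ k - 1 := by
    have h1 := Submodule.finrank_mono hHinf
    have h2 := Submodule.finrank_lt_finrank_of_lt hinflt
    omega
  have hHr : Module.finrank K H = k - 1 := le_antisymm hup hlow
  refine ⟨H, B₂, hHr, hB₂, le_trans (sup_le (sup_le hZ₁U hZ₂U) hZ₃U) hU2, ?_⟩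
  ext A
  constructor
  · rintro ⟨⟨⟨h1, hb, hr⟩, h2, -, -⟩, h3, -, -⟩
    exact ⟨sup_le (sup_le h1 h2) h3, hb, hr⟩
  · rintro ⟨hH, hb, hr⟩
    exact ⟨⟨⟨le_trans (le_sup_left.trans le_sup_left) hH, hb, hr⟩,
      le_trans (le_sup_right.trans le_sup_left) hH, hb, hr⟩,
      le_trans le_sup_right hH, hb, hr⟩
end

section
/- Assume the Grassmann space M with horizon W satisfies: every line has size at least 2·ind(M,W)+2, and for every point U and line p with U ∉ p spanning a strong subspace there is a proper maximal strong subspace through U meeting p. Then through every point of M (including improper points) there passes a proper line. -/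
variable {K V : Type*} [Field K] [AddCommGroup V] [Module K V]

/-- The points of the Grassmann space `P(V, k)`: the `k`-dimensional subspaces. -/
def GrPts (K : Type*) (V : Type*) [Field K] [AddCommGroup V] [Module K V] (k : ℕ) :
    Set (Submodule K V) :=
  {U : Submodule K V | Module.finrank K U = k}

/-- The lines of the Grassmann space `P(V, k)`: the `k`-pencils. -/
def GrLines (K : Type*) (V : Type*) [Field K] [AddCommGroup V] [Module K V] (k : ℕ) :
    Set (Set (Submodule K V)) :=
  {p | IsPencil k p}

/-- A subspace w.r.t. a line set `L`: any line of `L` through two of its points is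
contained in it. -/
def IsSubspaceOf {α : Type*} (L : Set (Set α)) (X : Set α) : Prop :=
  ∀ l ∈ L, ∀ a ∈ l, ∀ b ∈ l, a ≠ b → a ∈ X → b ∈ X → l ⊆ X

/-- A set is strong w.r.t. a line set `L` if any two of its points are collinear. -/
def IsStrongIn {α : Type*} (L : Set (Set α)) (X : Set α) : Prop :=
  ∀ a ∈ X, ∀ b ∈ X, a ≠ b → ∃ l ∈ L, a ∈ l ∧ b ∈ l

/-- `GrHasIndex K V k W lam`: some pencil has exactly `lam` points in `W` and every
pencil not contained in `W` has at most `lam` points in `W`. -/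
def GrHasIndex (K : Type*) (V : Type*) [Field K] [AddCommGroup V] [Module K V]
    (k : ℕ) (W : Set (Submodule K V)) (lam : ℕ) : Prop :=
  (∃ p ∈ GrLines K V k, (p ∩ W).encard = (lam : ℕ∞)) ∧
    ∀ p ∈ GrLines K V k, ¬ p ⊆ W → (p ∩ W).encard ≤ (lam : ℕ∞)

/-- A strong subspace of the Grassmann space `P(V, k)`. -/
def GrStrongSub (K : Type*) (V : Type*) [Field K] [AddCommGroup V] [Module K V]
    (k : ℕ) (X : Set (Submodule K V)) : Prop :=
  X ⊆ GrPts K V k ∧ IsSubspaceOf (GrLines K V k) X ∧ IsStrongIn (GrLines K V k) X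

/-- A maximal strong subspace of the Grassmann space `P(V, k)`. -/
def GrMaxStrongSub (K : Type*) (V : Type*) [Field K] [AddCommGroup V] [Module K V]
    (k : ℕ) (X : Set (Submodule K V)) : Prop :=
  GrStrongSub K V k X ∧ ∀ Y, GrStrongSub K V k Y → X ⊆ Y → Y = X

open Module in
lemma finrank_sup_span_singleton_of_not_mem [FiniteDimensional K V]
    {S : Submodule K V} {x : V} (hx : x ∉ S) :
    finrank K ↥(S ⊔ K ∙ x) = finrank K S + 1 := by
  have hx0 : x ≠ 0 := fun h => hx (h ▸ S.zero_mem)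
  have hinf : S ⊓ (K ∙ x) = ⊥ := by
    refine (eq_bot_iff).2 ?_
    rintro y ⟨hyS, hyx⟩
    rcases Submodule.mem_span_singleton.1 hyx with ⟨c, rfl⟩
    rcases eq_or_ne c 0 with rfl | hc
    · simp
    · exact absurd ((S.smul_mem_iff (inv_ne_zero hc)).2 (by simpa using hyS))
        (by simpa [smul_smul, inv_mul_cancel₀ hc] using hx)
  have := Submodule.finrank_sup_add_finrank_inf_eq S (K ∙ x)
  rw [hinf, finrank_bot, finrank_span_singleton hx0] at this
  omega

open Module in
lemma exists_submodule_le_finrank_eq [FiniteDimensional K V]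
    (U : Submodule K V) : ∀ d, d ≤ finrank K U → ∃ H ≤ U, finrank K H = d := by
  intro d
  induction d with
  | zero => exact fun _ => ⟨⊥, bot_le, finrank_bot K V⟩
  | succ d ih =>
    intro hd
    obtain ⟨H, hHU, hHd⟩ := ih (le_of_lt (Nat.lt_of_succ_le hd))
    have hlt : H < U := lt_of_le_of_ne hHU (by rintro rfl; omega)
    obtain ⟨x, hxU, hxH⟩ := SetLike.exists_of_lt hlt
    refine ⟨H ⊔ K ∙ x, sup_le hHU ((Submodule.span_singleton_le_iff_mem x U).2 hxU), ?_⟩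
    rw [finrank_sup_span_singleton_of_not_mem hxH, hHd]

open Module in
lemma exists_submodule_ge_finrank_eq [FiniteDimensional K V]
    (U : Submodule K V) : ∀ m, finrank K U + m ≤ finrank K V →
      ∃ B, U ≤ B ∧ finrank K B = finrank K U + m := by
  intro m
  induction m with
  | zero => exact fun _ => ⟨U, le_rfl, rfl⟩
  | succ m ih =>
    intro hm
    obtain ⟨B, hUB, hBm⟩ := ih (by omega)
    have hne : B ≠ ⊤ := by
      intro h
      rw [h, finrank_top] at hBm
      omega
    obtain ⟨x, -, hxB⟩ := SetLike.exists_of_lt (show B < ⊤ from lt_of_le_of_ne le_top hne)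
    exact ⟨B ⊔ K ∙ x, le_trans hUB le_sup_left,
      by rw [finrank_sup_span_singleton_of_not_mem hxB, hBm]; omega⟩

open Module in
lemma inf_eq_of_star [FiniteDimensional K V] {k : ℕ} (hk : 1 ≤ k)
    {H a b : Submodule K V} (hH : finrank K H = k - 1)
    (ha : finrank K a = k) (hb : finrank K b = k)
    (hHa : H ≤ a) (hHb : H ≤ b) (hab : a ≠ b) :
    a ⊓ b = H ∧ finrank K ↥(a ⊔ b) = k + 1 := by
  have hinf_lt : a ⊓ b < a := by
    refine lt_of_le_of_ne inf_le_left ?_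
    intro h
    exact hab (le_antisymm (by rw [← h]; exact inf_le_right)
      (Submodule.eq_of_le_of_finrank_le (by rw [← h]; exact inf_le_right)
        (by omega)).ge)
  have h1 : finrank K ↥(a ⊓ b) < k := ha ▸ Submodule.finrank_lt_finrank_of_lt hinf_lt
  have h2 : H ≤ a ⊓ b := le_inf hHa hHb
  have h3 : k - 1 ≤ finrank K ↥(a ⊓ b) := hH ▸ Submodule.finrank_mono h2
  have hinfr : finrank K ↥(a ⊓ b) = k - 1 := by omega
  have := Submodule.finrank_sup_add_finrank_inf_eq a b
  exact ⟨(Submodule.eq_of_le_of_finrank_le h2 (by omega)).symm, by omega⟩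

open Module in
lemma gstar_strong [FiniteDimensional K V] {k : ℕ} (hk : 1 ≤ k)
    {H : Submodule K V} (hH : finrank K H = k - 1) :
    GrStrongSub K V k (gstar k H) := by
  refine ⟨fun U hU => hU.1, ?_, ?_⟩
  · -- subspace property
    rintro l ⟨H', B', hH', hB', hH'B', rfl⟩ a ha b hb hab haX hbX
    have hXa := haX; have hXb := hbX
    obtain ⟨hinfH, -⟩ := inf_eq_of_star hk hH ha.2.2 hb.2.2 haX.2 hbX.2 hab
    obtain ⟨hinfH', -⟩ := inf_eq_of_star hk hH' ha.2.2 hb.2.2 ha.1 hb.1 hab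
    intro X hX
    exact ⟨hX.2.2, by rw [← hinfH, hinfH']; exact hX.1⟩
  · -- strongness
    intro a ha b hb hab
    obtain ⟨hinf, hsup⟩ := inf_eq_of_star hk hH ha.1 hb.1 ha.2 hb.2 hab
    refine ⟨{U : Submodule K V | H ≤ U ∧ U ≤ a ⊔ b ∧ finrank K U = k},
      ⟨H, a ⊔ b, hH, hsup, le_trans ha.2 le_sup_left, rfl⟩,
      ⟨ha.2, le_sup_left, ha.1⟩, ⟨hb.2, le_sup_right, hb.1⟩⟩

/-- under the size condition and condition (pps-grass), through every
point of the Grassmann space there passes a proper line. -/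
theorem proper_line_through_every_point {n k : ℕ} [FiniteDimensional K V]
    (hn : Module.finrank K V = n) (hk1 : 1 < k) (hk2 : k < n - 1)
    (W : Set (Submodule K V)) (lam : ℕ) (hlam : 0 < lam)
    (hind : GrHasIndex K V k W lam)
    (hsize : ∀ p ∈ GrLines K V k, 2 * (lam : ℕ∞) + 2 ≤ p.encard)
    (hpps : ∀ U ∈ GrPts K V k, ∀ p ∈ GrLines K V k, U ∉ p →
      (∃ X : Set (Submodule K V), GrStrongSub K V k X ∧ U ∈ X ∧ p ⊆ X) →
      ∃ Y : Set (Submodule K V), GrMaxStrongSub K V k Y ∧ ¬ Y ⊆ W ∧ U ∈ Y ∧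
        (Y ∩ p).Nonempty) :
    ∀ U ∈ GrPts K V k, ∃ p ∈ GrLines K V k, U ∈ p ∧ ¬ p ⊆ W := by
  intro U hU
  have hUk : Module.finrank K U = k := hU
  have hkn : k + 2 ≤ n := by omega
  obtain ⟨H, hHU, hHrk⟩ := exists_submodule_le_finrank_eq U (k - 1) (by omega)
  by_cases hUW : U ∈ W
  · -- construct a line p in the star of H missing U, apply (pps)
    have hUt : U ≠ ⊤ := by
      intro h; rw [h, finrank_top K V, hn] at hUk; omega
    obtain ⟨v₁, -, hv₁⟩ := SetLike.exists_of_lt (show U < ⊤ from lt_of_le_of_ne le_top hUt)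
    set U₁ := U ⊔ K ∙ v₁ with hU₁def
    have hU₁rk : Module.finrank K U₁ = k + 1 := by
      rw [hU₁def, finrank_sup_span_singleton_of_not_mem hv₁, hUk]
    have hU₁t : U₁ ≠ ⊤ := by
      intro h; rw [h, finrank_top K V, hn] at hU₁rk; omega
    obtain ⟨v₂, -, hv₂⟩ := SetLike.exists_of_lt (show U₁ < ⊤ from lt_of_le_of_ne le_top hU₁t)
    set B := (H ⊔ K ∙ v₁) ⊔ K ∙ v₂ with hBdef
    have hv₁H : v₁ ∉ H := fun h => hv₁ (hHU h)
    have hHv₁rk : Module.finrank K ↥(H ⊔ K ∙ v₁) = k := by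
      rw [finrank_sup_span_singleton_of_not_mem hv₁H, hHrk]; omega
    have hv₂Hv₁ : v₂ ∉ H ⊔ K ∙ v₁ := by
      intro h
      have hle : H ⊔ (K ∙ v₁) ≤ U₁ := sup_le (hHU.trans le_sup_left) le_sup_right
      exact hv₂ (hle h)
    have hBrk : Module.finrank K B = k + 1 := by
      rw [hBdef, finrank_sup_span_singleton_of_not_mem hv₂Hv₁, hHv₁rk]
    have hHB : H ≤ B := le_sup_left.trans le_sup_left
    have hUB : ¬ U ≤ B := by
      intro h
      have h1 : U₁ ≤ B := sup_le h (le_sup_right.trans le_sup_left)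
      have h2 : U₁ = B := Submodule.eq_of_le_of_finrank_le h1 (by omega)
      have hmem : v₂ ∈ B := Submodule.mem_sup_right (Submodule.mem_span_singleton_self v₂)
      rw [← h2] at hmem
      exact hv₂ hmem
    set p : Set (Submodule K V) :=
      {X : Submodule K V | H ≤ X ∧ X ≤ B ∧ Module.finrank K X = k} with hpdef
    have hpline : p ∈ GrLines K V k := ⟨H, B, hHrk, hBrk, hHB, rfl⟩
    have hUp : U ∉ p := fun h => hUB h.2.1
    have hstar : GrStrongSub K V k (gstar k H) := gstar_strong (by omega) hHrk
    have hUstar : U ∈ gstar k H := ⟨hUk, hHU⟩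
    have hpstar : p ⊆ gstar k H := fun X hX => ⟨hX.2.2, hX.1⟩
    obtain ⟨Y, hYmax, hYW, hUY, -⟩ :=
      hpps U hU p hpline hUp ⟨gstar k H, hstar, hUstar, hpstar⟩
    obtain ⟨y, hyY, hyW⟩ := Set.not_subset.1 hYW
    have hyU : U ≠ y := fun h => hyW (h ▸ hUW)
    obtain ⟨l, hl, hUl, hyl⟩ := hYmax.1.2.2 U hUY y hyY hyU
    exact ⟨l, hl, hUl, fun h => hyW (h hyl)⟩
  · -- any line through U works
    obtain ⟨B, hUB, hBrk⟩ := exists_submodule_ge_finrank_eq U 1 (by omega)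
    refine ⟨{X : Submodule K V | H ≤ X ∧ X ≤ B ∧ Module.finrank K X = k},
      ⟨H, B, hHrk, by omega, hHU.trans hUB, rfl⟩, ⟨hHU, hUB, hUk⟩,
      fun h => hUW (h ⟨hHU, hUB, hUk⟩)⟩
end

section
/- Let S be a star and T a top in a Grassmann space, U₁ ∈ S, U₂ ∈ T with U₁ and U₂ collinear. Then either S ∩ T = ∅, or U₁ ∈ S ∩ T, or U₂ ∈ S ∩ T. -/
variable {K V : Type*} [Field K] [AddCommGroup V] [Module K V]

/-- if `U₁` lies in a star `S(H)`, `U₂` lies in a top `T(B)` and `U₁, U₂`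
are collinear, then either the star and the top are disjoint, or `U₁` is in their
intersection, or `U₂` is. -/
theorem collinear_star_top {n k : ℕ} [FiniteDimensional K V]
    (hn : Module.finrank K V = n) (hk1 : 1 < k) (hk2 : k < n - 1)
    (H B : Submodule K V)
    (hH : Module.finrank K H = k - 1) (hB : Module.finrank K B = k + 1)
    (U₁ U₂ : Submodule K V) (hU₁ : U₁ ∈ gstar k H) (hU₂ : U₂ ∈ gtop k B)
    (hcol : GCollinear k U₁ U₂) :
    gstar k H ∩ gtop k B = ∅ ∨ U₁ ∈ gstar k H ∩ gtop k B ∨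
      U₂ ∈ gstar k H ∩ gtop k B := by
  by_cases hW : gstar k H ∩ gtop k B = ∅
  · exact Or.inl hW
  right
  obtain ⟨W, ⟨-, hHW⟩, -, hWB⟩ := Set.nonempty_iff_ne_empty.mpr hW
  obtain ⟨hne, p, ⟨H', B', hH', hB', hH'B', hp⟩, h1, h2⟩ := hcol
  rw [hp] at h1 h2
  obtain ⟨hH'1, h1B', h1k⟩ := h1
  obtain ⟨hH'2, h2B', h2k⟩ := h2
  -- finrank (U₁ ⊓ U₂) = k - 1
  have hlt : U₁ < U₁ ⊔ U₂ := lt_of_le_of_ne le_sup_left (fun h => hne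
    (Submodule.eq_of_le_of_finrank_eq (h ▸ le_sup_right) (by rw [h1k, h2k])).symm)
  have hsup1 : Module.finrank K ↥(U₁ ⊔ U₂) ≤ k + 1 := by
    have := Submodule.finrank_mono (R := K) (M := V) (sup_le h1B' h2B')
    omega
  have hsup2 : k < Module.finrank K ↥(U₁ ⊔ U₂) := by
    have := Submodule.finrank_lt_finrank_of_lt hlt
    omega
  have hrank := Submodule.finrank_sup_add_finrank_inf_eq U₁ U₂
  have hinf : Module.finrank K ↥(U₁ ⊓ U₂) = k - 1 := by
    rw [h1k, h2k] at hrank; omega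
  by_cases h1B : U₁ ≤ B
  · exact Or.inl ⟨hU₁, h1k, h1B⟩
  · right
    refine ⟨⟨h2k, ?_⟩, hU₂⟩
    have hHle : H ≤ U₁ ⊓ B := le_inf hU₁.2 (hHW.trans hWB)
    have hltB : U₁ ⊓ B < U₁ := inf_lt_left.mpr h1B
    have h1 : Module.finrank K ↥(U₁ ⊓ B) < k := by
      have := Submodule.finrank_lt_finrank_of_lt hltB
      omega
    have h2 : Module.finrank K ↥(U₁ ⊓ U₂) ≤ Module.finrank K ↥(U₁ ⊓ B) :=
      Submodule.finrank_mono (inf_le_inf_left _ hU₂.2)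
    have hHeq : H = U₁ ⊓ B :=
      Submodule.eq_of_le_of_finrank_eq hHle (by omega)
    have hDeq : U₁ ⊓ U₂ = U₁ ⊓ B :=
      Submodule.eq_of_le_of_finrank_eq (inf_le_inf_left _ hU₂.2) (by omega)
    rw [hHeq, ← hDeq]
    exact inf_le_right
end
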